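/- Let G be a simple graph and let w_0, w_1, …, w_ℓ be a non-backtracking walk in G. If 0 ≤ i and i + 2 ≤ j ≤ ℓ and (j − i + 1 : ℕ∞) < girth(G), then w_i and w_j are not adjacent in G. -/

import Mathlib

/-!
A non-backtracking walk shorter than the girth is a path: the first return of the walk to its
starting vertex would close a cycle no longer than the walk, and the only way such a return fails
to be a cycle is by immediately retracing the first edge. Hence the segment `w_i, …, w_j` is a path
of length `j - i ≥ 2`, and an edge `w_j w_i` would close it into a cycle of length
`j - i + 1 < girth`.
-/

namespace SimpleGraph.Walk

variable {V : Type*} {G : SimpleGraph V}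

def IsNonBacktracking {u v : V} (p : G.Walk u v) : Prop :=
  ∀ i, i + 2 ≤ p.length → p.getVert (i + 2) ≠ p.getVert i

lemma IsNonBacktracking.of_cons {u v w : V} {h : G.Adj u v} {p : G.Walk v w}
    (hp : (cons h p).IsNonBacktracking) : p.IsNonBacktracking :=
  fun i hi ↦ by simpa using hp (i + 1) (by simpa using hi)

lemma IsNonBacktracking.getVert_one_ne_of_cons {u v w : V} {h : G.Adj u v} {p : G.Walk v w}
    (hp : (cons h p).IsNonBacktracking) (hlen : 1 ≤ p.length) : p.getVert 1 ≠ u := by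
  simpa using hp 0 (by simpa using hlen)

lemma IsNonBacktracking.drop {u v : V} {p : G.Walk u v} (hp : p.IsNonBacktracking) (n : ℕ) :
    (p.drop n).IsNonBacktracking := fun i hi ↦ by
  simpa [← add_assoc] using hp (n + i) (by rw [drop_length] at hi; omega)

lemma IsNonBacktracking.take {u v : V} {p : G.Walk u v} (hp : p.IsNonBacktracking) (n : ℕ) :
    (p.take n).IsNonBacktracking := fun i hi ↦ by
  simp only [take_length, le_inf_iff] at hi
  simpa [Nat.min_eq_right hi.1, Nat.min_eq_right (by omega : i ≤ n)] using hp i hi.2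

lemma IsPath.egirth_le_length_add_one {u v : V} {p : G.Walk v u} (hp : p.IsPath) (h : G.Adj u v)
    (hlen : p.length ≠ 1) : G.egirth ≤ p.length + 1 := by
  have hcyc : (cons h p).IsCycle :=
    (cons_isCycle_iff p h).2 ⟨hp, fun he ↦ hlen (hp.length_eq_one_of_mem_edges (Sym2.eq_swap ▸ he))⟩
  simpa using egirth_le_length hcyc

lemma IsNonBacktracking.isPath {u v : V} {p : G.Walk u v} (hp : p.IsNonBacktracking)
    (hlen : (p.length : ℕ∞) < G.egirth) : p.IsPath := by
  classical
  induction p with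
  | nil => exact .nil
  | @cons u v w h p ih =>
    have hpath : p.IsPath := ih hp.of_cons (lt_of_le_of_lt (by simp) hlen)
    refine hpath.cons fun hu ↦ ?_
    have hle := p.length_takeUntil_le_length hu
    have hq : (p.takeUntil u hu).length ≠ 1 := fun hq ↦ by
      refine hp.getVert_one_ne_of_cons (by omega) ?_
      rw [← getVert_takeUntil hu hq.ge, ← hq, getVert_length]
    have hcyc := (hpath.takeUntil hu).egirth_le_length_add_one h hq
    simp only [length_cons, Nat.cast_add, Nat.cast_one] at hlen
    exact (hlen.trans_le (hcyc.trans (by gcongr))).false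

end SimpleGraph.Walk

open SimpleGraph Walk in
/-- On a non-backtracking walk, two positions `i` and `j` with
`i + 2 ≤ j` and `j - i + 1` less than the girth carry non-adjacent vertices. -/
theorem nonbacktracking_walk_not_adj {V : Type*} (G : SimpleGraph V) {u v : V}
    (W : G.Walk u v)
    (hnb : ∀ i : ℕ, 1 ≤ i → i + 1 ≤ W.length → W.getVert (i + 1) ≠ W.getVert (i - 1))
    (i j : ℕ) (hij : i + 2 ≤ j) (hj : j ≤ W.length)
    (hgirth : ((j - i + 1 : ℕ) : ℕ∞) < G.egirth) :
    ¬ G.Adj (W.getVert i) (W.getVert j) := by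
  intro hadj
  have hW : W.IsNonBacktracking := fun k hk ↦ hnb (k + 1) (by omega) (by omega)
  set P := (W.drop i).take (j - i)
  have hPlen : P.length = j - i := by simp only [P, take_length, drop_length]; omega
  have hP : P.IsPath := ((hW.drop i).take (j - i)).isPath <| by
    rw [hPlen]
    exact (Nat.cast_le.2 (Nat.le_succ _)).trans_lt hgirth
  have hPend : (W.drop i).getVert (j - i) = W.getVert j := by
    rw [drop_getVert, Nat.add_sub_cancel' (by omega)]
  have hcyc := hP.reverse.egirth_le_length_add_one (hPend ▸ hadj) (by rw [length_reverse, hPlen]; omega)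
  rw [length_reverse, hPlen] at hcyc
  exact (hgirth.trans_le (by exact_mod_cast hcyc)).false
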